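/- (Rankin–Selberg Euler product.) Let k ≥ 1 be an integer, let a be a normalized Hecke eigensystem of weight 2k and b a normalized Hecke eigensystem of weight 2k+8. For each prime p, let α_p ∈ ℂ with |α_p| = 1 and α_p + α_p^{−1} = a(p)·p^{−(2k−1)/2}, and let β_p ∈ ℂ with |β_p| = 1 and β_p + β_p^{−1} = b(p)·p^{−(2k+7)/2}. Then for every real s > 1, the series Σ_{n=1}^∞ a(n)·conj(b(n))·n^{−(s+2k+3)} converges absolutely, the infinite product over primes p of Π_{i∈{1,−1}} Π_{j∈{1,−1}} (1 − α_p^i·conj(β_p)^j·p^{−s})^{−1} converges absolutely, and ζ(2s)·Σ_{n=1}^∞ a(n)·conj(b(n))·n^{−(s+2k+3)} = Π_p Π_{i∈{1,−1}} Π_{j∈{1,−1}} (1 − α_p^i·conj(β_p)^j·p^{−s})^{−1}, where ζ is the Riemann zeta function. -/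
import Mathlib


open Complex Real
open scoped ComplexConjugate

noncomputable section

/-- `a : ℕ → ℂ` (with `a n` the `n`-th coefficient, `n ≥ 1`) is a normalized Hecke
eigensystem of weight `w`: `a 1 = 1`, the Hecke multiplicativity relations
`a m * a n = ∑_{d ∣ gcd(m,n)} d^{w-1} a(mn/d²)` hold, and Deligne's bound
`|a p| ≤ 2 p^{(w-1)/2}` holds at every prime `p`. -/
def IsNormalizedHeckeEigensystem (w : ℕ) (a : ℕ → ℂ) : Prop :=
  a 1 = 1 ∧
  (∀ m n : ℕ, 1 ≤ m → 1 ≤ n →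
      a m * a n = ∑ d ∈ (Nat.gcd m n).divisors, (d : ℂ) ^ (w - 1) * a (m * n / d ^ 2)) ∧
  (∀ p : ℕ, p.Prime → ‖a p‖ ≤ 2 * (p : ℝ) ^ (((w : ℝ) - 1) / 2))

/-- The local Rankin–Selberg Euler factor
`∏_{i ∈ {1,-1}} ∏_{j ∈ {1,-1}} (1 - α_p^i conj(β_p)^j p^{-s})⁻¹` at a prime `p`. -/
def rsEulerFactor (α β : ℕ → ℂ) (s : ℝ) (p : ℕ) : ℂ :=
  ∏ i ∈ ({1, -1} : Finset ℤ), ∏ j ∈ ({1, -1} : Finset ℤ),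
    (1 - α p ^ i * (conj (β p)) ^ j * (((p : ℝ) ^ (-s) : ℝ) : ℂ))⁻¹

namespace RSAux

/-- Chebyshev-like character sum `∑_{i=0}^{ν} A^{ν-2i}`. -/
def S (A : ℂ) (ν : ℕ) : ℂ := ∑ i ∈ Finset.range (ν + 1), A ^ ((ν : ℤ) - 2 * (i : ℤ))

lemma S_zero (A : ℂ) : S A 0 = 1 := by simp [S]

lemma S_one (A : ℂ) : S A 1 = A + A⁻¹ := by
  rw [S, Finset.sum_range_succ, Finset.sum_range_one]
  norm_num

lemma S_rec {A : ℂ} (hA : A ≠ 0) (n : ℕ) :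
    (A + A⁻¹) * S A (n + 1) = S A (n + 2) + S A n := by
  have step : ∀ i : ℕ, (A + A⁻¹) * A ^ (((n + 1 : ℕ) : ℤ) - 2 * (i : ℤ))
      = A ^ (((n + 2 : ℕ) : ℤ) - 2 * (i : ℤ)) + A ^ ((n : ℤ) - 2 * (i : ℤ)) := by
    intro i
    have h1 : ((n + 2 : ℕ) : ℤ) - 2 * (i : ℤ) = (((n + 1 : ℕ) : ℤ) - 2 * (i : ℤ)) + 1 := by
      push_cast; ring
    have h2 : ((n : ℕ) : ℤ) - 2 * (i : ℤ) = (((n + 1 : ℕ) : ℤ) - 2 * (i : ℤ)) - 1 := by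
      push_cast; ring
    rw [h1, h2, zpow_add_one₀ hA, zpow_sub_one₀ hA]
    ring
  rw [S, Finset.mul_sum]
  simp_rw [step]
  rw [Finset.sum_add_distrib]
  have h3 : ∑ i ∈ Finset.range (n + 1 + 1), A ^ (((n + 2 : ℕ) : ℤ) - 2 * (i : ℤ))
      = S A (n + 2) - A ^ (-(n : ℤ) - 2) := by
    have : S A (n + 2) = (∑ i ∈ Finset.range (n + 1 + 1), A ^ (((n + 2 : ℕ) : ℤ) - 2 * (i : ℤ)))
        + A ^ (((n + 2 : ℕ) : ℤ) - 2 * ((n + 2 : ℕ) : ℤ)) := by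
      rw [S, Finset.sum_range_succ]
    rw [this]
    have h4 : ((n + 2 : ℕ) : ℤ) - 2 * ((n + 2 : ℕ) : ℤ) = -(n : ℤ) - 2 := by push_cast; ring
    rw [h4]; ring
  have h5 : ∑ i ∈ Finset.range (n + 1 + 1), A ^ ((n : ℤ) - 2 * (i : ℤ))
      = S A n + A ^ (-(n : ℤ) - 2) := by
    rw [Finset.sum_range_succ, ← S]
    congr 2
    push_cast; ring
  rw [h3, h5]; ring

lemma S_rec' {A : ℂ} (hA : A ≠ 0) (n : ℕ) :
    S A (n + 2) = (A + A⁻¹) * S A (n + 1) - S A n := by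
  rw [S_rec hA]; ring

lemma norm_S_le {A : ℂ} (hA : ‖A‖ = 1) (ν : ℕ) : ‖S A ν‖ ≤ (ν : ℝ) + 1 := by
  calc ‖S A ν‖ ≤ ∑ i ∈ Finset.range (ν + 1), ‖A ^ ((ν : ℤ) - 2 * (i : ℤ))‖ :=
        norm_sum_le _ _
    _ = ∑ i ∈ Finset.range (ν + 1), (1 : ℝ) := by
        refine Finset.sum_congr rfl fun i _ => ?_
        rw [norm_zpow, hA, one_zpow]
    _ = (ν : ℝ) + 1 := by simp

lemma conj_S (A : ℂ) (ν : ℕ) : conj (S A ν) = S (conj A) ν := by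
  rw [S, S, map_sum]
  exact Finset.sum_congr rfl fun i _ => map_zpow₀ (starRingEnd ℂ) A _


def pcoef (t r : ℂ) : ℕ → ℂ := fun m =>
  if m = 0 then 1 else if m = 1 then -(t * r) else if m = 2 then t ^ 2 + r ^ 2 - 2
  else if m = 3 then -(t * r) else if m = 4 then 1 else 0

lemma prod_rec (t r u0 u1 v0 v1 : ℂ) :
    (pcoef t r 0) * ((t * (t * (t * u1 - u0) - u1) - (t * u1 - u0)) *
        (r * (r * (r * v1 - v0) - v1) - (r * v1 - v0)))
      + (pcoef t r 1) * ((t * (t * u1 - u0) - u1) * (r * (r * v1 - v0) - v1))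
      + (pcoef t r 2) * ((t * u1 - u0) * (r * v1 - v0))
      + (pcoef t r 3) * (u1 * v1)
      + (pcoef t r 4) * (u0 * v0) = 0 := by
  simp only [pcoef]
  norm_num
  ring

lemma summable_norm_c {A B x : ℂ} (hA : ‖A‖ = 1) (hB : ‖B‖ = 1) (hx : ‖x‖ < 1) :
    Summable (fun e : ℕ => ‖S A e * S B e * x ^ e‖) := by
  have hxn : 0 ≤ ‖x‖ := norm_nonneg x
  have hxx : ‖(‖x‖)‖ < 1 := by rwa [Real.norm_eq_abs, _root_.abs_of_nonneg hxn]
  have hsum : Summable (fun e : ℕ => ((e : ℝ) + 1) ^ 2 * ‖x‖ ^ e) := by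
    have a1 := summable_pow_mul_geometric_of_norm_lt_one (R := ℝ) 2 hxx
    have a2 := summable_pow_mul_geometric_of_norm_lt_one (R := ℝ) 1 hxx
    have a3 := summable_geometric_of_lt_one hxn hx
    simp only [pow_one] at a1 a2
    have h2 := (a1.add ((a2.mul_left 2).add a3))
    refine h2.congr fun e => ?_
    ring
  refine Summable.of_nonneg_of_le (fun e => norm_nonneg _) (fun e => ?_) hsum
  rw [norm_mul, norm_mul, norm_pow]
  calc ‖S A e‖ * ‖S B e‖ * ‖x‖ ^ e ≤ ((e : ℝ) + 1) * ((e : ℝ) + 1) * ‖x‖ ^ e := by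
        apply mul_le_mul_of_nonneg_right _ (pow_nonneg hxn e)
        exact mul_le_mul (norm_S_le hA e) (norm_S_le hB e) (norm_nonneg _) (by positivity)
    _ = ((e : ℝ) + 1) ^ 2 * ‖x‖ ^ e := by ring

lemma core {A B x : ℂ} (hA : ‖A‖ = 1) (hB : ‖B‖ = 1) (hx : ‖x‖ < 1) :
    HasSum (fun e : ℕ => S A e * S B e * x ^ e)
      ((1 - x ^ 2) * ∏ i ∈ ({1, -1} : Finset ℤ), ∏ j ∈ ({1, -1} : Finset ℤ),
        (1 - A ^ i * B ^ j * x)⁻¹) := by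
  have hA0 : A ≠ 0 := fun h => by simp [h] at hA
  have hB0 : B ≠ 0 := fun h => by simp [h] at hB
  set t := A + A⁻¹ with ht
  set r := B + B⁻¹ with hr
  set c : ℕ → ℂ := fun e => S A e * S B e with hc
  have hsum : Summable (fun e : ℕ => c e * x ^ e) := (summable_norm_c hA hB hx).of_norm
  set T := ∑' e : ℕ, c e * x ^ e with hT
  have hhsT : HasSum (fun e : ℕ => c e * x ^ e) T := hsum.hasSum
  set Q := ∏ i ∈ ({1, -1} : Finset ℤ), ∏ j ∈ ({1, -1} : Finset ℤ), (1 - A ^ i * B ^ j * x)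
    with hQdef
  have hne : (1 : ℤ) ≠ -1 := by decide
  -- Q as a polynomial in x
  have ha' : A * A⁻¹ = 1 := mul_inv_cancel₀ hA0
  have hb' : B * B⁻¹ = 1 := mul_inv_cancel₀ hB0
  have he1 : A*B + A*B⁻¹ + A⁻¹*B + A⁻¹*B⁻¹ = t * r := by rw [ht, hr]; ring
  have he2 : (A*B)*(A*B⁻¹)+(A*B)*(A⁻¹*B)+(A*B)*(A⁻¹*B⁻¹)+(A*B⁻¹)*(A⁻¹*B)
        +(A*B⁻¹)*(A⁻¹*B⁻¹)+(A⁻¹*B)*(A⁻¹*B⁻¹) = t^2 + r^2 - 2 := by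
    rw [ht, hr]
    linear_combination (B^2 + (B⁻¹)^2 + 2*(B*B⁻¹-1)) * ha' + (A^2+(A⁻¹)^2) * hb'
  have he3 : (A*B)*(A*B⁻¹)*(A⁻¹*B)+(A*B)*(A*B⁻¹)*(A⁻¹*B⁻¹)+(A*B)*(A⁻¹*B)*(A⁻¹*B⁻¹)
        +(A*B⁻¹)*(A⁻¹*B)*(A⁻¹*B⁻¹) = t * r := by
    rw [ht, hr]
    linear_combination (B*B⁻¹*(A*B+A*B⁻¹+A⁻¹*B+A⁻¹*B⁻¹)) * ha'
      + (A*B+A*B⁻¹+A⁻¹*B+A⁻¹*B⁻¹) * hb'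
  have he4 : (A*B)*(A*B⁻¹)*((A⁻¹*B)*(A⁻¹*B⁻¹)) = 1 := by
    linear_combination ((A*A⁻¹+1)*(B*B⁻¹)^2) * ha' + (B*B⁻¹+1) * hb'
  have hQ : Q = ∑ m ∈ Finset.range 5, pcoef t r m * x ^ m := by
    rw [hQdef, Finset.prod_pair hne, Finset.prod_pair hne, Finset.prod_pair hne]
    simp only [zpow_one, zpow_neg_one, Finset.sum_range_succ, Finset.sum_range_zero, pcoef]
    norm_num
    linear_combination (-x) * he1 + x^2 * he2 + (-x^3) * he3 + x^4 * he4
  -- shifted partial series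
  have hg : ∀ m : ℕ, HasSum
      (fun n : ℕ => if m ≤ n then pcoef t r m * c (n - m) * x ^ n else 0)
      (pcoef t r m * x ^ m * T) := by
    intro m
    have h1 : HasSum (fun e : ℕ => pcoef t r m * x ^ m * (c e * x ^ e))
        (pcoef t r m * x ^ m * T) := hhsT.mul_left _
    have hinj : Function.Injective (fun e : ℕ => m + e) := fun u v h => by
      simpa using h
    refine (Function.Injective.hasSum_iff hinj ?_).mp (h1.congr_fun fun e => ?_)
    · intro n hn
      have hmn : ¬ m ≤ n := fun h => hn ⟨n - m, by show m + (n - m) = n; omega⟩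
      simp [hmn]
    · simp only [Function.comp_apply]
      rw [if_pos (Nat.le_add_right m e), Nat.add_sub_cancel_left, pow_add]
      ring
  have hgsum : HasSum (fun n : ℕ => ∑ m ∈ Finset.range 5,
      (if m ≤ n then pcoef t r m * c (n - m) * x ^ n else 0))
      (∑ m ∈ Finset.range 5, pcoef t r m * x ^ m * T) :=
    hasSum_sum fun m _ => hg m
  -- identify the summed function
  have hS1 : S A 1 = t := S_one A
  have hS1' : S B 1 = r := S_one B
  have hdd : ∀ n : ℕ, (∑ m ∈ Finset.range 5,
      (if m ≤ n then pcoef t r m * c (n - m) * x ^ n else 0))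
      = (if n = 0 then 1 else 0) + (if n = 2 then -(x ^ 2) else 0) := by
    intro n
    match n with
    | 0 =>
      simp [Finset.sum_range_succ, pcoef, hc, S_zero]
    | 1 =>
      simp [Finset.sum_range_succ, pcoef, hc, S_zero, hS1, hS1']
      try ring
    | 2 =>
      have e2 : S A 2 = t * S A 1 - S A 0 := S_rec' hA0 0
      have f2 : S B 2 = r * S B 1 - S B 0 := S_rec' hB0 0
      simp [Finset.sum_range_succ, pcoef, hc, S_zero, hS1, hS1', e2, f2]
      ring
    | 3 =>
      have e2 : S A 2 = t * S A 1 - S A 0 := S_rec' hA0 0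
      have f2 : S B 2 = r * S B 1 - S B 0 := S_rec' hB0 0
      have e3 : S A 3 = t * S A 2 - S A 1 := S_rec' hA0 1
      have f3 : S B 3 = r * S B 2 - S B 1 := S_rec' hB0 1
      simp [Finset.sum_range_succ, pcoef, hc, S_zero, hS1, hS1', e2, f2, e3, f3]
      ring
    | (m + 4) =>
      have e2 : S A (m + 2) = t * S A (m + 1) - S A m := S_rec' hA0 m
      have f2 : S B (m + 2) = r * S B (m + 1) - S B m := S_rec' hB0 m
      have e3 : S A (m + 3) = t * S A (m + 2) - S A (m + 1) := S_rec' hA0 (m + 1)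
      have f3 : S B (m + 3) = r * S B (m + 2) - S B (m + 1) := S_rec' hB0 (m + 1)
      have e4 : S A (m + 4) = t * S A (m + 3) - S A (m + 2) := S_rec' hA0 (m + 2)
      have f4 : S B (m + 4) = r * S B (m + 3) - S B (m + 2) := S_rec' hB0 (m + 2)
      have h0 : (if (m + 4 : ℕ) = 0 then (1 : ℂ) else 0) + (if (m + 4 : ℕ) = 2 then -(x ^ 2) else 0) = 0 := by
        rw [if_neg (by omega : ¬(m + 4 = 0)), if_neg (by omega : ¬(m + 4 = 2))]
        norm_num
      rw [h0]
      rw [Finset.sum_range_succ, Finset.sum_range_succ, Finset.sum_range_succ,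
        Finset.sum_range_succ, Finset.sum_range_one]
      rw [if_pos (by omega : (0:ℕ) ≤ m + 4), if_pos (by omega : (1:ℕ) ≤ m + 4),
        if_pos (by omega : (2:ℕ) ≤ m + 4), if_pos (by omega : (3:ℕ) ≤ m + 4),
        if_pos (by omega : (4:ℕ) ≤ m + 4)]
      have s1 : m + 4 - 1 = m + 3 := by omega
      have s2 : m + 4 - 2 = m + 2 := by omega
      have s3 : m + 4 - 3 = m + 1 := by omega
      have s4 : m + 4 - 4 = m := by omega
      have s0 : m + 4 - 0 = m + 4 := by omega
      rw [s0, s1, s2, s3, s4]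
      have key := prod_rec t r (S A m) (S A (m + 1)) (S B m) (S B (m + 1))
      rw [← e2, ← f2] at key
      rw [show t * (t * S A (m+2) - S A (m+1)) - S A (m+2)
            = t * (S A (m+3)) - S A (m+2) by rw [e3]] at key
      rw [show r * (r * S B (m+2) - S B (m+1)) - S B (m+2)
            = r * (S B (m+3)) - S B (m+2) by rw [f3]] at key
      rw [← e4, ← f4, ← e3, ← f3] at key
      simp only [hc]
      linear_combination x ^ (m + 4) * key
  -- conclude Q * T = 1 - x^2
  have hQT : Q * T = 1 - x ^ 2 := by
    have h1 : HasSum (fun n : ℕ => (if n = 0 then (1:ℂ) else 0) + (if n = 2 then -(x ^ 2) else 0))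
        (1 + -(x ^ 2)) := (hasSum_ite_eq 0 1).add (hasSum_ite_eq 2 (-(x ^ 2)))
    have h2 := hgsum.congr_fun (fun n => (hdd n).symm)
    have h3 := h1.unique h2
    rw [← Finset.sum_mul, ← hQ] at h3
    rw [← h3]; ring
  -- Q ≠ 0
  have hQ0 : Q ≠ 0 := by
    rw [hQdef]
    refine Finset.prod_ne_zero_iff.mpr fun i _ => Finset.prod_ne_zero_iff.mpr fun j _ => ?_
    intro h
    rw [sub_eq_zero] at h
    have h1 : ‖(1:ℂ)‖ = ‖A ^ i * B ^ j * x‖ := by rw [← h]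
    rw [norm_one, norm_mul, norm_mul, norm_zpow, norm_zpow, hA, hB, one_zpow, one_zpow,
      one_mul, one_mul] at h1
    rw [← h1] at hx
    exact lt_irrefl _ hx
  have hfinal : T = (1 - x ^ 2) * Q⁻¹ := by
    field_simp
    linear_combination hQT
  have : (1 - x ^ 2) * ∏ i ∈ ({1, -1} : Finset ℤ), ∏ j ∈ ({1, -1} : Finset ℤ),
      (1 - A ^ i * B ^ j * x)⁻¹ = T := by
    rw [hfinal]
    congr 1
    rw [hQdef]
    simp only [Finset.prod_inv_distrib]
  rw [this]
  exact hhsT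


variable {w : ℕ} {a : ℕ → ℂ}

lemma hecke_mul (ha : IsNormalizedHeckeEigensystem w a) {m n : ℕ} (hm : 1 ≤ m) (hn : 1 ≤ n)
    (h : Nat.Coprime m n) : a (m * n) = a m * a n := by
  have h2 := ha.2.1 m n hm hn
  rw [Nat.Coprime] at h
  rw [h, Nat.divisors_one, Finset.sum_singleton] at h2
  simpa using h2.symm

lemma hecke_pp (ha : IsNormalizedHeckeEigensystem w a) {p : ℕ} (hp : p.Prime) (ν : ℕ) :
    a p * a (p ^ (ν + 1)) = a (p ^ (ν + 2)) + (p : ℂ) ^ (w - 1) * a (p ^ ν) := by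
  have h2 := ha.2.1 p (p ^ (ν + 1)) hp.one_lt.le (Nat.one_le_pow _ _ hp.pos)
  have hg : Nat.gcd p (p ^ (ν + 1)) = p := Nat.gcd_eq_left (dvd_pow_self p (by omega))
  rw [hg, Nat.Prime.divisors hp, Finset.sum_pair hp.one_lt.ne] at h2
  have hpp : p * p ^ (ν + 1) = p ^ (ν + 2) := by ring
  have e1 : p * p ^ (ν + 1) / 1 ^ 2 = p ^ (ν + 2) := by simpa using hpp
  have e2 : p * p ^ (ν + 1) / p ^ 2 = p ^ ν := by
    rw [hpp]
    have : ν + 2 - 2 = ν := by omega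
    rw [Nat.pow_div (by omega) hp.pos, this]
  rw [e1, e2] at h2
  simpa using h2

lemma a_pp (ha : IsNormalizedHeckeEigensystem w a) (hw : 1 ≤ w) {p : ℕ} (hp : p.Prime)
    {A : ℂ} (hA0 : A ≠ 0)
    (hA : a p = ((((p : ℝ) ^ (((w : ℝ) - 1) / 2)) : ℝ) : ℂ) * (A + A⁻¹)) (ν : ℕ) :
    a (p ^ ν) = ((((p : ℝ) ^ ((ν : ℝ) * (((w : ℝ) - 1) / 2))) : ℝ) : ℂ) * S A ν := by
  have hP : (0 : ℝ) < (p : ℝ) := by exact_mod_cast hp.pos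
  induction ν using Nat.strong_induction_on with
  | _ ν ih =>
    match ν with
    | 0 => simp [ha.1, S_zero]
    | 1 =>
      rw [pow_one, hA, S_one,
        show (((1:ℕ)) : ℝ) * (((w : ℝ) - 1) / 2) = ((w : ℝ) - 1) / 2 by push_cast; ring]
    | (ν + 2) =>
      have key := hecke_pp ha hp ν
      have iv1 := ih (ν + 1) (by omega)
      have iv0 := ih ν (by omega)
      have hcpow : (p : ℂ) ^ (w - 1) = ((((p : ℝ) ^ (((w : ℝ) - 1))) : ℝ) : ℂ) := by
        have : ((w : ℝ) - 1) = ((w - 1 : ℕ) : ℝ) := by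
          have : (1 : ℕ) ≤ w := hw
          push_cast [Nat.cast_sub this]
          ring
        rw [this, Real.rpow_natCast]
        push_cast
        ring
      have key2 : a (p ^ (ν + 2)) = a p * a (p ^ (ν + 1)) - (p : ℂ) ^ (w - 1) * a (p ^ ν) := by
        linear_combination -key
      rw [key2, hA, iv1, iv0, hcpow]
      rw [S_rec' hA0]
      have m1 : ((p : ℝ) ^ (((w : ℝ) - 1) / 2)) * ((p : ℝ) ^ (((ν : ℕ) + 1 : ℕ) * (((w : ℝ) - 1) / 2)))
          = (p : ℝ) ^ ((((ν : ℕ) + 2 : ℕ) : ℝ) * (((w : ℝ) - 1) / 2)) := by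
        rw [← Real.rpow_add hP]
        congr 1
        push_cast
        ring
      have m2 : ((p : ℝ) ^ ((w : ℝ) - 1)) * ((p : ℝ) ^ ((ν : ℝ) * (((w : ℝ) - 1) / 2)))
          = (p : ℝ) ^ ((((ν : ℕ) + 2 : ℕ) : ℝ) * (((w : ℝ) - 1) / 2)) := by
        rw [← Real.rpow_add hP]
        congr 1
        push_cast
        ring
      have c1 : ((((p : ℝ) ^ (((w : ℝ) - 1) / 2)) : ℝ) : ℂ) *
          ((((p : ℝ) ^ (((ν + 1 : ℕ) : ℝ) * (((w : ℝ) - 1) / 2))) : ℝ) : ℂ)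
          = ((((p : ℝ) ^ ((((ν + 2 : ℕ)) : ℝ) * (((w : ℝ) - 1) / 2))) : ℝ) : ℂ) := by
        rw [← Complex.ofReal_mul, m1]
      have c2 : ((((p : ℝ) ^ (((w : ℝ) - 1))) : ℝ) : ℂ) *
          ((((p : ℝ) ^ ((ν : ℝ) * (((w : ℝ) - 1) / 2))) : ℝ) : ℂ)
          = ((((p : ℝ) ^ ((((ν + 2 : ℕ)) : ℝ) * (((w : ℝ) - 1) / 2))) : ℝ) : ℂ) := by
        rw [← Complex.ofReal_mul, m2]
      linear_combination (A + A⁻¹) * S A (ν + 1) * c1 - S A ν * c2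


/-- The Rankin–Selberg Dirichlet series coefficients `a n conj(b n) / n^E`. -/
def rsF (a b : ℕ → ℂ) (E : ℝ) : ℕ → ℂ := fun n =>
  a n * conj (b n) / ((((n : ℝ) ^ E) : ℝ) : ℂ)

lemma rsF_zero (a b : ℕ → ℂ) {E : ℝ} (hE : E ≠ 0) : rsF a b E 0 = 0 := by
  simp [rsF, Real.zero_rpow hE]

lemma rsF_one {w w' : ℕ} {a b : ℕ → ℂ} (ha : IsNormalizedHeckeEigensystem w a)
    (hb : IsNormalizedHeckeEigensystem w' b) (E : ℝ) : rsF a b E 1 = 1 := by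
  simp [rsF, ha.1, hb.1]

lemma rsF_mul {w w' : ℕ} {a b : ℕ → ℂ} (ha : IsNormalizedHeckeEigensystem w a)
    (hb : IsNormalizedHeckeEigensystem w' b) {E : ℝ} (hE : E ≠ 0) {m n : ℕ}
    (h : Nat.Coprime m n) : rsF a b E (m * n) = rsF a b E m * rsF a b E n := by
  rcases Nat.eq_zero_or_pos m with hm | hm
  · subst hm; rw [zero_mul, rsF_zero a b hE, zero_mul]
  rcases Nat.eq_zero_or_pos n with hn | hn
  · subst hn; rw [mul_zero, rsF_zero a b hE, mul_zero]
  have hab : a (m * n) = a m * a n := hecke_mul ha hm hn h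
  have hbb : b (m * n) = b m * b n := hecke_mul hb hm hn h
  have hr : ((m * n : ℕ) : ℝ) ^ E = ((m : ℕ) : ℝ) ^ E * ((n : ℕ) : ℝ) ^ E := by
    push_cast
    exact Real.mul_rpow (by positivity) (by positivity)
  rw [rsF, rsF, rsF, hab, hbb, map_mul, hr]
  push_cast
  rw [div_mul_div_comm]
  ring

/-- local computation of `rsF` at prime powers. -/
lemma rsF_pp {k : ℕ} {a b : ℕ → ℂ} (ha : IsNormalizedHeckeEigensystem (2 * k) a)
    (hb : IsNormalizedHeckeEigensystem (2 * k + 8) b) (hk : 1 ≤ k)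
    {p : ℕ} (hp : p.Prime) {A B : ℂ} (hA0 : A ≠ 0) (hB0 : B ≠ 0)
    (hA : A + A⁻¹ = a p / ((((p : ℝ) ^ ((2 * (k : ℝ) - 1) / 2)) : ℝ) : ℂ))
    (hB : B + B⁻¹ = b p / ((((p : ℝ) ^ ((2 * (k : ℝ) + 7) / 2)) : ℝ) : ℂ))
    (s : ℝ) (e : ℕ) :
    rsF a b (s + 2 * k + 3) (p ^ e)
      = S A e * S (conj B) e * ((((p : ℝ) ^ (-s)) : ℝ) : ℂ) ^ e := by
  have hP : (0 : ℝ) < (p : ℝ) := by exact_mod_cast hp.pos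
  have hPa : (0 : ℝ) < (p : ℝ) ^ ((2 * (k : ℝ) - 1) / 2) := Real.rpow_pos_of_pos hP _
  have hPb : (0 : ℝ) < (p : ℝ) ^ ((2 * (k : ℝ) + 7) / 2) := Real.rpow_pos_of_pos hP _
  -- a p in product form
  have hA' : a p = ((((p : ℝ) ^ ((((2 * k : ℕ) : ℝ) - 1) / 2)) : ℝ) : ℂ) * (A + A⁻¹) := by
    have hCa : ((((p : ℝ) ^ ((2 * (k : ℝ) - 1) / 2)) : ℝ) : ℂ) ≠ 0 := by
      exact_mod_cast hPa.ne'
    rw [show ((((2 * k : ℕ) : ℝ)) - 1) / 2 = (2 * (k : ℝ) - 1) / 2 by push_cast; ring, hA]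
    field_simp
  have hB' : b p = ((((p : ℝ) ^ ((((2 * k + 8 : ℕ) : ℝ) - 1) / 2)) : ℝ) : ℂ) * (B + B⁻¹) := by
    have hCb : ((((p : ℝ) ^ ((2 * (k : ℝ) + 7) / 2)) : ℝ) : ℂ) ≠ 0 := by
      exact_mod_cast hPb.ne'
    rw [show ((((2 * k + 8 : ℕ) : ℝ)) - 1) / 2 = (2 * (k : ℝ) + 7) / 2 by push_cast; ring, hB]
    field_simp
  have haa := a_pp ha (by omega) hp hA0 hA' e
  have hbb := a_pp hb (by omega) hp hB0 hB' e
  have hbbc : conj (b (p ^ e))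
      = ((((p : ℝ) ^ ((e : ℝ) * ((((2 * k + 8 : ℕ) : ℝ) - 1) / 2))) : ℝ) : ℂ)
        * S (conj B) e := by
    rw [hbb, map_mul, Complex.conj_ofReal, conj_S]
  -- denominator
  have hden : (((p ^ e : ℕ) : ℝ)) ^ (s + 2 * (k : ℝ) + 3)
      = (p : ℝ) ^ ((e : ℝ) * (s + 2 * (k : ℝ) + 3)) := by
    push_cast
    rw [← Real.rpow_natCast (p : ℝ) e, ← Real.rpow_mul hP.le]
  -- exponent arithmetic
  have hexp : (p : ℝ) ^ ((e : ℝ) * ((((2 * k : ℕ) : ℝ) - 1) / 2))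
      * ((p : ℝ) ^ ((e : ℝ) * ((((2 * k + 8 : ℕ) : ℝ) - 1) / 2)))
      = ((p : ℝ) ^ (-s)) ^ e * ((p : ℝ) ^ ((e : ℝ) * (s + 2 * (k : ℝ) + 3))) := by
    rw [← Real.rpow_natCast ((p : ℝ) ^ (-s)) e, ← Real.rpow_mul hP.le,
      ← Real.rpow_add hP, ← Real.rpow_add hP]
    congr 1
    push_cast
    ring
  rw [rsF, haa, hbbc, hden]
  have hdenne : ((((p : ℝ) ^ ((e : ℝ) * (s + 2 * (k : ℝ) + 3))) : ℝ) : ℂ) ≠ 0 := by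
    exact_mod_cast (Real.rpow_pos_of_pos hP _).ne'
  rw [div_eq_iff hdenne]
  have hexpC := congrArg (fun y : ℝ => (y : ℂ)) hexp
  simp only [Complex.ofReal_mul, Complex.ofReal_pow] at hexpC
  linear_combination S A e * S (conj B) e * hexpC

section Summability

variable {k : ℕ} (hk : 1 ≤ k) {a b : ℕ → ℂ}
  (ha : IsNormalizedHeckeEigensystem (2 * k) a)
  (hb : IsNormalizedHeckeEigensystem (2 * k + 8) b)
  {α β : ℕ → ℂ}
  (hα : ∀ p : ℕ, p.Prime → ‖α p‖ = 1 ∧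
    α p + (α p)⁻¹ = a p / ((((p : ℝ) ^ ((2 * (k : ℝ) - 1) / 2)) : ℝ) : ℂ))
  (hβ : ∀ p : ℕ, p.Prime → ‖β p‖ = 1 ∧
    β p + (β p)⁻¹ = b p / ((((p : ℝ) ^ ((2 * (k : ℝ) + 7) / 2)) : ℝ) : ℂ))
  {s : ℝ} (hs : 1 < s)

include hk ha hb hα hβ hs

lemma summable_norm_rsF :
    Summable (fun n : ℕ => ‖rsF a b (s + 2 * k + 3) n‖) := by
  have hE0 : (s + 2 * (k : ℝ) + 3) ≠ 0 := by positivity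
  set E : ℝ := s + 2 * (k : ℝ) + 3 with hE
  set g : ℕ → ℝ := fun n => ‖rsF a b E n‖ with hgdef
  have hg1 : g 1 = 1 := by
    show ‖rsF a b E 1‖ = 1
    rw [rsF_one ha hb, norm_one]
  have hgmul : ∀ {m n : ℕ}, Nat.Coprime m n → g (m * n) = g m * g n := by
    intro m n h
    rw [hgdef]
    simp only
    rw [rsF_mul ha hb hE0 h, norm_mul]
  have hgnonneg : ∀ n, 0 ≤ g n := fun n => norm_nonneg _
  -- prime power data
  have hpp : ∀ p : ℕ, p.Prime →
      (∀ e : ℕ, g (p ^ e) = ‖S (α p) e * S (conj (β p)) e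
        * ((((p : ℝ) ^ (-s)) : ℝ) : ℂ) ^ e‖) := by
    intro p hp e
    have hα0 : α p ≠ 0 := fun h => by
      have := (hα p hp).1; rw [h] at this; simp at this
    have hβ0 : β p ≠ 0 := fun h => by
      have := (hβ p hp).1; rw [h] at this; simp at this
    rw [hgdef]
    simp only
    rw [rsF_pp ha hb hk hp hα0 hβ0 (hα p hp).2 (hβ p hp).2 s e]
  have hxlt : ∀ p : ℕ, p.Prime → ‖((((p : ℝ) ^ (-s)) : ℝ) : ℂ)‖ < 1 := by
    intro p hp
    rw [Complex.norm_real, Real.norm_eq_abs,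
      _root_.abs_of_nonneg (Real.rpow_nonneg (by positivity) _)]
    exact Real.rpow_lt_one_of_one_lt_of_neg (by exact_mod_cast hp.one_lt) (by linarith)
  have hconjβ : ∀ p : ℕ, p.Prime → ‖conj (β p)‖ = 1 := by
    intro p hp
    rw [RCLike.norm_conj]
    exact (hβ p hp).1
  -- summability over prime powers
  have hsum_pp : ∀ {p : ℕ}, p.Prime → Summable (fun e : ℕ => ‖g (p ^ e)‖) := by
    intro p hp
    have h1 : Summable (fun e : ℕ => ‖S (α p) e * S (conj (β p)) e
        * ((((p : ℝ) ^ (-s)) : ℝ) : ℂ) ^ e‖) :=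
      summable_norm_c (hα p hp).1 (hconjβ p hp) (hxlt p hp)
    refine h1.congr fun e => ?_
    rw [Real.norm_eq_abs, _root_.abs_of_nonneg (hgnonneg _), hpp p hp e]
  have hsum_pp' : ∀ {p : ℕ}, p.Prime → Summable (fun e : ℕ => g (p ^ e)) := by
    intro p hp
    refine (hsum_pp hp).congr fun e => ?_
    rw [Real.norm_eq_abs, _root_.abs_of_nonneg (hgnonneg _)]
  -- the uniform constant
  set z : ℝ := (2 : ℝ) ^ (-s) with hzdef
  have hz0 : 0 < z := Real.rpow_pos_of_pos (by norm_num) _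
  have hz1 : z < 1 := Real.rpow_lt_one_of_one_lt_of_neg (by norm_num) (by linarith)
  have hzsum : Summable (fun e : ℕ => ((e : ℝ) + 2) ^ 2 * z ^ e) := by
    have hzz : ‖z‖ < 1 := by rwa [Real.norm_eq_abs, _root_.abs_of_nonneg hz0.le]
    have a1 := summable_pow_mul_geometric_of_norm_lt_one (R := ℝ) 2 hzz
    have a2 := summable_pow_mul_geometric_of_norm_lt_one (R := ℝ) 1 hzz
    have a3 := summable_geometric_of_lt_one hz0.le hz1
    simp only [pow_one] at a1 a2
    refine (a1.add ((a2.mul_left 4).add (a3.mul_left 4))).congr fun e => ?_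
    ring
  set C0 : ℝ := ∑' e : ℕ, ((e : ℝ) + 2) ^ 2 * z ^ e with hC0def
  have hC0 : 0 ≤ C0 := tsum_nonneg fun e => by positivity
  -- tsum bound at each prime
  have htb : ∀ p : ℕ, p.Prime →
      (∑' e : ℕ, g (p ^ e)) ≤ Real.exp (C0 * (p : ℝ) ^ (-s)) := by
    intro p hp
    have hP1 : (1 : ℝ) < (p : ℝ) := by exact_mod_cast hp.one_lt
    set y : ℝ := (p : ℝ) ^ (-s) with hydef
    have hy0 : 0 < y := Real.rpow_pos_of_pos (by linarith) _
    have hyz : y ≤ z := by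
      rw [hydef, hzdef, Real.rpow_neg (by linarith : (0:ℝ) ≤ (p:ℝ)),
        Real.rpow_neg (by norm_num : (0:ℝ) ≤ (2:ℝ))]
      refine inv_anti₀ (Real.rpow_pos_of_pos (by norm_num) _) ?_
      exact Real.rpow_le_rpow (by norm_num) (by exact_mod_cast hp.two_le) (by linarith)
    have hterm : ∀ e : ℕ, g (p ^ (e + 1)) ≤ (((e : ℝ) + 2) ^ 2 * z ^ e) * y := by
      intro e
      rw [hpp p hp (e + 1), norm_mul, norm_mul, norm_pow]
      have n1 := norm_S_le (hα p hp).1 (e + 1)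
      have n2 := norm_S_le (hconjβ p hp) (e + 1)
      push_cast at n1 n2
      have hxy : ‖((y : ℝ) : ℂ)‖ = y := by
        rw [Complex.norm_real, Real.norm_eq_abs, _root_.abs_of_nonneg hy0.le]
      rw [hxy]
      have hy1 : y ^ (e + 1) ≤ z ^ e * y := by
        rw [pow_succ]
        exact mul_le_mul_of_nonneg_right (pow_le_pow_left₀ hy0.le hyz e) hy0.le
      calc ‖S (α p) (e+1)‖ * ‖S (conj (β p)) (e+1)‖ * y ^ (e + 1)
          ≤ (((e : ℝ) + 1) + 1) * (((e : ℝ) + 1) + 1) * (z ^ e * y) := by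
            refine mul_le_mul (mul_le_mul n1 n2 (norm_nonneg _) (by push_cast; positivity))
              hy1 (by positivity) (by push_cast; positivity)
        _ = (((e : ℝ) + 2) ^ 2 * z ^ e) * y := by push_cast; ring
    have hs1 : Summable (fun e : ℕ => g (p ^ (e + 1))) :=
      (hsum_pp' hp).comp_injective fun u v h => by omega
    have h2 : (∑' e : ℕ, g (p ^ e)) = g (p ^ 0) + ∑' e : ℕ, g (p ^ (e + 1)) :=
      Summable.tsum_eq_zero_add (hsum_pp' hp)
    have h3 : (∑' e : ℕ, g (p ^ (e + 1))) ≤ C0 * y := by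
      have h4 : (∑' e : ℕ, g (p ^ (e + 1))) ≤ ∑' e : ℕ, (((e : ℝ) + 2) ^ 2 * z ^ e) * y :=
        Summable.tsum_le_tsum hterm hs1 (hzsum.mul_right y)
      rwa [tsum_mul_right] at h4
    rw [h2, pow_zero, hg1]
    have h5 : 1 + C0 * y ≤ Real.exp (C0 * y) := by
      have := Real.add_one_le_exp (C0 * y)
      linarith
    have h6 : C0 * y = C0 * (p:ℝ) ^ (-s) := rfl
    linarith
  -- the summable prime majorant
  set eps : ℕ → ℝ := fun n => if n.Prime then C0 * (n : ℝ) ^ (-s) else 0 with hepsdef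
  have heps0 : ∀ n, 0 ≤ eps n := by
    intro n
    rw [hepsdef]
    dsimp only
    split
    · positivity
    · exact le_refl _
  have hepssum : Summable eps := by
    have hmaj : Summable (fun n : ℕ => C0 * (n : ℝ) ^ (-s)) :=
      (Real.summable_nat_rpow.mpr (by linarith : -s < -1)).mul_left C0
    refine Summable.of_nonneg_of_le heps0 (fun n => ?_) hmaj
    rw [hepsdef]
    dsimp only
    split
    · exact le_refl _
    · positivity
  set CC : ℝ := Real.exp (∑' n : ℕ, eps n) with hCCdef
  -- product over primes below N is bounded by CC
  have hprodbound : ∀ N : ℕ,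
      (∏ p ∈ N.primesBelow, ∑' e : ℕ, g (p ^ e)) ≤ CC := by
    intro N
    have h1 : (∏ p ∈ N.primesBelow, ∑' e : ℕ, g (p ^ e))
        ≤ ∏ p ∈ N.primesBelow, Real.exp (eps p) := by
      refine Finset.prod_le_prod (fun p _ => tsum_nonneg fun e => hgnonneg _) fun p hp => ?_
      have hprime := Nat.prime_of_mem_primesBelow hp
      have hepsp : eps p = C0 * (p : ℝ) ^ (-s) := by
        simp only [hepsdef, if_pos hprime]
      rw [hepsp]
      exact htb p hprime
    have h2 : (∏ p ∈ N.primesBelow, Real.exp (eps p))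
        = Real.exp (∑ p ∈ N.primesBelow, eps p) := (Real.exp_sum _ _).symm
    have h3 : (∑ p ∈ N.primesBelow, eps p) ≤ ∑' n : ℕ, eps n :=
      Summable.sum_le_tsum _ (fun n _ => heps0 n) hepssum
    calc (∏ p ∈ N.primesBelow, ∑' e : ℕ, g (p ^ e))
        ≤ ∏ p ∈ N.primesBelow, Real.exp (eps p) := h1
      _ = Real.exp (∑ p ∈ N.primesBelow, eps p) := h2
      _ ≤ CC := Real.exp_le_exp.mpr h3
  -- conclude summability
  refine summable_of_sum_le (c := CC) hgnonneg fun F => ?_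
  set N : ℕ := F.sup id + 1 with hNdef
  have hES := EulerProduct.summable_and_hasSum_smoothNumbers_prod_primesBelow_tsum
    (f := g) hg1 (fun {m n} h => hgmul h) (fun {p} hp => hsum_pp hp) N
  have hsubsum : Summable (fun m : N.smoothNumbers => g m) := hES.2.summable
  have hindsum : Summable (Set.indicator (N.smoothNumbers : Set ℕ) g) :=
    summable_subtype_iff_indicator.mp hsubsum
  have hstep1 : (∑ n ∈ F, g n) ≤ ∑ n ∈ F, Set.indicator (N.smoothNumbers : Set ℕ) g n := by
    refine Finset.sum_le_sum fun n hn => ?_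
    rcases Nat.eq_zero_or_pos n with h0 | h0
    · subst h0
      have : g 0 = 0 := by
        show ‖rsF a b E 0‖ = 0
        rw [rsF_zero a b hE0, norm_zero]
      rw [this]
      exact Set.indicator_apply_nonneg fun _ => hgnonneg _
    · have hmem : n ∈ N.smoothNumbers :=
        Nat.mem_smoothNumbers_of_lt h0 (by
          have : n ≤ F.sup id := Finset.le_sup (f := id) hn
          omega)
      rw [Set.indicator_of_mem hmem]
  have hstep2 : (∑ n ∈ F, Set.indicator (N.smoothNumbers : Set ℕ) g n)
      ≤ ∑' n : ℕ, Set.indicator (N.smoothNumbers : Set ℕ) g n :=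
    Summable.sum_le_tsum F (fun n _ => Set.indicator_apply_nonneg fun _ => hgnonneg _) hindsum
  have hstep3 : (∑' n : ℕ, Set.indicator (N.smoothNumbers : Set ℕ) g n)
      = ∏ p ∈ N.primesBelow, ∑' e : ℕ, g (p ^ e) := by
    rw [← tsum_subtype]
    exact hES.2.tsum_eq
  calc (∑ n ∈ F, g n) ≤ ∑ n ∈ F, Set.indicator (N.smoothNumbers : Set ℕ) g n := hstep1
    _ ≤ ∑' n : ℕ, Set.indicator (N.smoothNumbers : Set ℕ) g n := hstep2
    _ = ∏ p ∈ N.primesBelow, ∑' e : ℕ, g (p ^ e) := hstep3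
    _ ≤ CC := hprodbound N

end Summability

end RSAux

open RSAux in
/-- The Rankin–Selberg Euler product: for normalized Hecke eigensystems `a` of weight `2k`
and `b` of weight `2k+8`, with unit-modulus Satake parameters `α_p`, `β_p`, and any real
`s > 1`: the Dirichlet series `∑ a(n) conj(b(n)) n^{-(s+2k+3)}` converges absolutely, the
Euler product over the primes converges, and
`ζ(2s) ∑_{n≥1} a(n) conj(b(n)) n^{-(s+2k+3)}
   = ∏_p ∏_{i∈{1,-1}} ∏_{j∈{1,-1}} (1 - α_p^i conj(β_p)^j p^{-s})⁻¹`. -/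
theorem rankin_selberg_euler_product (k : ℕ) (hk : 1 ≤ k) (a b : ℕ → ℂ)
    (ha : IsNormalizedHeckeEigensystem (2 * k) a)
    (hb : IsNormalizedHeckeEigensystem (2 * k + 8) b)
    (α β : ℕ → ℂ)
    (hα : ∀ p : ℕ, p.Prime → ‖α p‖ = 1 ∧
      α p + (α p)⁻¹ = a p / ((((p : ℝ) ^ ((2 * (k : ℝ) - 1) / 2)) : ℝ) : ℂ))
    (hβ : ∀ p : ℕ, p.Prime → ‖β p‖ = 1 ∧
      β p + (β p)⁻¹ = b p / ((((p : ℝ) ^ ((2 * (k : ℝ) + 7) / 2)) : ℝ) : ℂ))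
    (s : ℝ) (hs : 1 < s) :
    Summable (fun n : ℕ =>
      ‖a (n + 1) * conj (b (n + 1))‖ / ((n : ℝ) + 1) ^ (s + 2 * k + 3)) ∧
    Multipliable (fun p : Nat.Primes => rsEulerFactor α β s p) ∧
    riemannZeta (2 * (s : ℂ)) *
        ∑' n : ℕ, a (n + 1) * conj (b (n + 1)) / (((((n : ℝ) + 1) ^ (s + 2 * k + 3)) : ℝ) : ℂ)
      = ∏' p : Nat.Primes, rsEulerFactor α β s p := by
  have hE0 : s + 2 * (k : ℝ) + 3 ≠ 0 := by positivity
  set f : ℕ → ℂ := rsF a b (s + 2 * k + 3) with hfdef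
  have hsumnorm : Summable (fun n : ℕ => ‖f n‖) := summable_norm_rsF hk ha hb hα hβ hs
  -- formula for f at successors
  have hfsucc : ∀ n : ℕ,
      f (n + 1) = a (n + 1) * conj (b (n + 1)) / (((((n : ℝ) + 1) ^ (s + 2 * k + 3)) : ℝ) : ℂ) := by
    intro n
    show rsF a b (s + 2 * k + 3) (n + 1) = _
    rw [rsF]
    norm_num
  -- conjunct 1
  have hc1 : Summable (fun n : ℕ =>
      ‖a (n + 1) * conj (b (n + 1))‖ / ((n : ℝ) + 1) ^ (s + 2 * k + 3)) := by
    have h1 : Summable (fun n : ℕ => ‖f (n + 1)‖) :=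
      hsumnorm.comp_injective fun u v h => by omega
    refine h1.congr fun n => ?_
    rw [hfsucc n, norm_div, Complex.norm_real, Real.norm_eq_abs,
      _root_.abs_of_nonneg (Real.rpow_nonneg (by positivity) _)]
  -- Euler product for f
  have f0 : f 0 = 0 := rsF_zero a b hE0
  have f1 : f 1 = 1 := rsF_one ha hb _
  have fmul : ∀ {m n : ℕ}, Nat.Coprime m n → f (m * n) = f m * f n :=
    fun h => rsF_mul ha hb hE0 h
  have hEP : HasProd (fun p : Nat.Primes => ∑' e : ℕ, f ((p : ℕ) ^ e)) (∑' n : ℕ, f n) :=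
    EulerProduct.eulerProduct_hasProd f1 fmul hsumnorm f0
  -- basic facts at primes
  have hxnorm : ∀ p : Nat.Primes, ‖(((((p : ℕ) : ℝ)) ^ (-s) : ℝ) : ℂ)‖ < 1 := by
    intro p
    rw [Complex.norm_real, Real.norm_eq_abs,
      _root_.abs_of_nonneg (Real.rpow_nonneg (by positivity) _)]
    exact Real.rpow_lt_one_of_one_lt_of_neg (by exact_mod_cast p.prop.one_lt) (by linarith)
  have hXne : ∀ p : Nat.Primes, (1 - (((((p : ℕ) : ℝ)) ^ (-s) : ℝ) : ℂ) ^ 2) ≠ 0 := by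
    intro p
    intro h
    have h1 : ((((((p : ℕ) : ℝ)) ^ (-s) : ℝ) : ℂ)) ^ 2 = 1 := by linear_combination -h
    have h2 : ‖(((((p : ℕ) : ℝ)) ^ (-s) : ℝ) : ℂ)‖ ^ 2 = 1 := by
      rw [← norm_pow, h1, norm_one]
    have h3 := hxnorm p
    nlinarith [norm_nonneg (((((p : ℕ) : ℝ)) ^ (-s) : ℝ) : ℂ)]
  -- local factor identification
  have hlocal : ∀ p : Nat.Primes, (∑' e : ℕ, f ((p : ℕ) ^ e))
      = (1 - (((((p : ℕ) : ℝ)) ^ (-s) : ℝ) : ℂ) ^ 2) * rsEulerFactor α β s p := by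
    intro p
    have hp := p.prop
    have hα0 : α p ≠ 0 := fun h => by
      have := (hα p hp).1; rw [h] at this; simp at this
    have hβ0 : β p ≠ 0 := fun h => by
      have := (hβ p hp).1; rw [h] at this; simp at this
    have hconjβ : ‖conj (β (p : ℕ))‖ = 1 := by
      rw [RCLike.norm_conj]; exact (hβ p hp).1
    have hcore := core (A := α p) (B := conj (β p)) (x := (((((p:ℕ) : ℝ)) ^ (-s) : ℝ) : ℂ))
      (hα p hp).1 hconjβ (hxnorm p)
    have hfun : (fun e : ℕ => f ((p : ℕ) ^ e))
        = fun e : ℕ => S (α p) e * S (conj (β p)) e * (((((p:ℕ) : ℝ)) ^ (-s) : ℝ) : ℂ) ^ e := by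
      funext e
      exact rsF_pp ha hb hk hp hα0 hβ0 (hα p hp).2 (hβ p hp).2 s e
    rw [hfun, hcore.tsum_eq]
    rfl
  -- zeta factor
  have h2s : (1 : ℝ) < (2 * (s : ℂ)).re := by simp; linarith
  have hζ := riemannZeta_eulerProduct_hasProd h2s
  have hz2 : HasProd (fun p : Nat.Primes => (1 - (((((p:ℕ) : ℝ)) ^ (-s) : ℝ) : ℂ) ^ 2)⁻¹)
      (riemannZeta (2 * (s : ℂ))) := by
    refine hζ.congr_fun fun p => ?_
    congr 2
    rw [← Complex.ofReal_pow, ← Real.rpow_natCast (((p:ℕ) : ℝ) ^ (-s)) 2,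
      ← Real.rpow_mul (by positivity)]
    rw [Complex.ofReal_cpow (by positivity)]
    congr 1
    all_goals push_cast
    all_goals ring
  -- combine
  have hmain : HasProd (fun p : Nat.Primes => rsEulerFactor α β s p)
      (riemannZeta (2 * (s : ℂ)) * ∑' n : ℕ, f n) := by
    have hm := hz2.mul hEP
    refine hm.congr_fun fun p => ?_
    rw [hlocal p, ← mul_assoc, inv_mul_cancel₀ (hXne p), one_mul]
  refine ⟨hc1, ⟨_, hmain⟩, ?_⟩
  rw [hmain.tprod_eq]
  congr 1
  rw [Summable.tsum_eq_zero_add hsumnorm.of_norm, f0, zero_add]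
  exact (tsum_congr fun n => (hfsucc n).symm)

end
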